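/- Consider the networked control causal factorization over a horizon T with finite alphabets. Then for every t ∈ {1,…,T}, the conditional mutual information between the current disclosed pair and the present-and-future private inputs vanishes: I( (S_t, U_t) ; (Y_t, Y_{t+1}, …, Y_T) | S^{t-1}, U^{t-1}, Y^{t-1} ) = 0, where for t = 1 the conditioning is vacuous (i.e. I((S_1,U_1); Y^T) = 0). -/

import Mathlib

open scoped BigOperators Classical

noncomputable section

namespace NCS

/-- Probability of an event under a pmf `P` on a finite sample space. -/
def pr {Ω : Type} [Fintype Ω] (P : Ω → ℝ) (E : Ω → Prop) : ℝ :=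
  ∑ ω, if E ω then P ω else 0

/-- Conditional probability `P(E | F)`, as a ratio of probabilities. -/
def condPr {Ω : Type} [Fintype Ω] (P : Ω → ℝ) (E F : Ω → Prop) : ℝ :=
  pr P (fun ω => E ω ∧ F ω) / pr P F

/-- Mutual information `I(f ; g)` between two finitely-valued random variables
`f` and `g` defined on a finite sample space with pmf `P` (natural logarithm;
summands with zero probability vanish since `0 * log _ = 0`). -/
def MI {Ω A B : Type} [Fintype Ω] [Fintype A] [Fintype B]
    (P : Ω → ℝ) (f : Ω → A) (g : Ω → B) : ℝ :=
  ∑ a : A, ∑ b : B,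
    pr P (fun ω => f ω = a ∧ g ω = b) *
      Real.log (pr P (fun ω => f ω = a ∧ g ω = b) /
        (pr P (fun ω => f ω = a) * pr P (fun ω => g ω = b)))

/-- Conditional mutual information `I(f ; g | h)`. -/
def condMI {Ω A B C : Type} [Fintype Ω] [Fintype A] [Fintype B] [Fintype C]
    (P : Ω → ℝ) (f : Ω → A) (g : Ω → B) (h : Ω → C) : ℝ :=
  ∑ a : A, ∑ b : B, ∑ c : C,
    pr P (fun ω => f ω = a ∧ g ω = b ∧ h ω = c) *
      Real.log (condPr P (fun ω => f ω = a ∧ g ω = b) (fun ω => h ω = c) /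
        (condPr P (fun ω => f ω = a) (fun ω => h ω = c) *
          condPr P (fun ω => g ω = b) (fun ω => h ω = c)))


/-! ### The networked control causal factorization -/

variable {T : ℕ} {X Y Z S U : Type}

/-- The strict history `a^{t-1} = (a_1, …, a_{t-1})` of a trajectory (0-indexed). -/
def hist {A : Type} (f : Fin T → A) (t : Fin T) : Fin t.1 → A :=
  fun i => f ⟨i.1, lt_trans i.2 t.2⟩

/-- The inclusive history `a^t = (a_1, …, a_t)` of a trajectory (0-indexed). -/
def histIncl {A : Type} (f : Fin T → A) (t : Fin T) : Fin (t.1 + 1) → A :=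
  fun i => f ⟨i.1, lt_of_le_of_lt (Nat.lt_succ_iff.mp i.2) t.2⟩

/-- Drop the last entry of a history. -/
def trunc {A : Type} {n : ℕ} (f : Fin (n + 1) → A) : Fin n → A :=
  fun i => f ⟨i.1, Nat.lt_succ_of_lt i.2⟩

/-- The previous value `a_{t-1}`, or `none` at the initial time (vacuous conditioning). -/
def prevO {A : Type} (f : Fin T → A) (t : Fin T) : Option A :=
  if t.1 = 0 then none
  else some (f ⟨t.1 - 1, lt_of_le_of_lt (Nat.sub_le _ _) t.2⟩)

/-- The previous triple `(x_{t-1}, y_{t-1}, u_{t-1})`, or `none` at the initial time. -/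
def prev3 (x : Fin T → X) (y : Fin T → Y) (u : Fin T → U) (t : Fin T) :
    Option (X × Y × U) :=
  if t.1 = 0 then none
  else some (x ⟨t.1 - 1, lt_of_le_of_lt (Nat.sub_le _ _) t.2⟩,
             y ⟨t.1 - 1, lt_of_le_of_lt (Nat.sub_le _ _) t.2⟩,
             u ⟨t.1 - 1, lt_of_le_of_lt (Nat.sub_le _ _) t.2⟩)

/-- The fixed conditional pmfs (kernels) `P_Y(y_t | y_{t-1})`,
`P_X(x_t | x_{t-1}, y_{t-1}, u_{t-1})`, `P_Z(z_t | x_t)`; conditioning on `none`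
encodes the vacuous conditioning at `t = 1`. -/
structure Kernels (X Y Z U : Type) [Fintype X] [Fintype Y] [Fintype Z] [Fintype U] where
  PY : Option Y → Y → ℝ
  PX : Option (X × Y × U) → X → ℝ
  PZ : X → Z → ℝ
  PY_nonneg : ∀ p y, 0 ≤ PY p y
  PY_sum : ∀ p, ∑ y, PY p y = 1
  PX_nonneg : ∀ p x, 0 ≤ PX p x
  PX_sum : ∀ p, ∑ x, PX p x = 1
  PZ_nonneg : ∀ x z, 0 ≤ PZ x z
  PZ_sum : ∀ x, ∑ z, PZ x z = 1

/-- A quantizer policy family `π^e_t(s_t | z^t, s^{t-1}, u^{t-1})`. -/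
def QPol (T : ℕ) (Z S U : Type) : Type :=
  (t : Fin T) → (Fin (t.1 + 1) → Z) → (Fin t.1 → S) → (Fin t.1 → U) → S → ℝ

/-- A controller policy family `π^c_t(u_t | s^t, u^{t-1})`. -/
def CPol (T : ℕ) (S U : Type) : Type :=
  (t : Fin T) → (Fin (t.1 + 1) → S) → (Fin t.1 → U) → U → ℝ

/-- `π^e` is a family of conditional pmfs. -/
def IsQPol [Fintype S] (πe : QPol T Z S U) : Prop :=
  (∀ t zs ss us st, 0 ≤ πe t zs ss us st) ∧ (∀ t zs ss us, ∑ st, πe t zs ss us st = 1)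

/-- `π^c` is a family of conditional pmfs. -/
def IsCPol [Fintype U] (πc : CPol T S U) : Prop :=
  (∀ t ss us ut, 0 ≤ πc t ss us ut) ∧ (∀ t ss us, ∑ ut, πc t ss us ut = 1)

/-- The sample space of full trajectories `(x^T, y^T, z^T, s^T, u^T)`. -/
abbrev Traj (T : ℕ) (X Y Z S U : Type) : Type :=
  (Fin T → X) × (Fin T → Y) × (Fin T → Z) × (Fin T → S) × (Fin T → U)

def trX (ω : Traj T X Y Z S U) : Fin T → X := ω.1
def trY (ω : Traj T X Y Z S U) : Fin T → Y := ω.2.1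
def trZ (ω : Traj T X Y Z S U) : Fin T → Z := ω.2.2.1
def trS (ω : Traj T X Y Z S U) : Fin T → S := ω.2.2.2.1
def trU (ω : Traj T X Y Z S U) : Fin T → U := ω.2.2.2.2

variable [Fintype X] [Fintype Y] [Fintype Z] [Fintype S] [Fintype U]

/-- The joint pmf of the networked control causal factorization:
`P(x^T, y^T, z^T, s^T, u^T) = ∏_t P_Y(y_t|y_{t-1}) P_X(x_t|x_{t-1},y_{t-1},u_{t-1})
P_Z(z_t|x_t) π^e_t(s_t|z^t,s^{t-1},u^{t-1}) π^c_t(u_t|s^t,u^{t-1})`. -/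
def joint (K : Kernels X Y Z U) (πe : QPol T Z S U) (πc : CPol T S U) :
    Traj T X Y Z S U → ℝ :=
  fun (x, y, z, s, u) =>
    ∏ t : Fin T,
      K.PY (prevO y t) (y t) *
      K.PX (prev3 x y u t) (x t) *
      K.PZ (x t) (z t) *
      πe t (histIncl z t) (hist s t) (hist u t) (s t) *
      πc t (histIncl s t) (hist u t) (u t)


/-! ### Auxiliary machinery -/

lemma sum_pi_factor {ι α : Type} [Fintype ι] [DecidableEq ι] [Fintype α] [Nonempty α]
    (i : ι) (g G : (ι → α) → ℝ) (q : (ι → α) → α → ℝ)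
    (hdec : ∀ f, g f = G f * q f (f i))
    (hG : ∀ f v, G (Function.update f i v) = G f)
    (hq : ∀ f v w, q (Function.update f i w) v = q f v)
    (hsum : ∀ f, ∑ v, q f v = 1) :
    (Fintype.card α : ℝ) * ∑ f, g f = ∑ f, G f := by
  classical
  set e := Equiv.funSplitAt i α with he
  have key : ∀ (v : α) (w : { j // j ≠ i } → α) (v' : α),
      e.symm (v, w) = Function.update (e.symm (v', w)) i v := by
    intro v w v'
    funext j
    by_cases h : j = i
    · subst h; simp [he, Equiv.funSplitAt, Equiv.piSplitAt]
    · simp [he, Equiv.funSplitAt, Equiv.piSplitAt, h, Function.update_of_ne h]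
  obtain ⟨v₀⟩ := ‹Nonempty α›
  have hL : ∑ f, g f = ∑ w : { j // j ≠ i } → α, G (e.symm (v₀, w)) := by
    rw [← Equiv.sum_comp e.symm g, Fintype.sum_prod_type, Finset.sum_comm]
    refine Finset.sum_congr rfl fun w _ => ?_
    have : ∀ v, g (e.symm (v, w)) = G (e.symm (v₀, w)) * q (e.symm (v₀, w)) v := by
      intro v
      rw [hdec]
      have h1 : e.symm (v, w) = Function.update (e.symm (v₀, w)) i v := key v w v₀
      have hvi : (e.symm (v, w)) i = v := by
        simp [he, Equiv.funSplitAt, Equiv.piSplitAt]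
      rw [hvi, h1, hG, hq]
    simp only [this, ← Finset.mul_sum, hsum, mul_one]
  have hR : ∑ f, G f = (Fintype.card α : ℝ) * ∑ w : { j // j ≠ i } → α, G (e.symm (v₀, w)) := by
    rw [← Equiv.sum_comp e.symm G, Fintype.sum_prod_type, Finset.sum_comm]
    have : ∀ w : { j // j ≠ i } → α, ∀ v, G (e.symm (v, w)) = G (e.symm (v₀, w)) := by
      intro w v
      rw [key v w v₀, hG]
    calc ∑ w : { j // j ≠ i } → α, ∑ v, G (e.symm (v, w))
        = ∑ w : { j // j ≠ i } → α, (Fintype.card α : ℝ) * G (e.symm (v₀, w)) := by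
          refine Finset.sum_congr rfl fun w _ => ?_
          simp [this w, Finset.sum_const, mul_comm]
      _ = _ := by rw [← Finset.mul_sum]
  rw [hL, hR]

lemma pr_congr {Ω : Type} [Fintype Ω] (P : Ω → ℝ) {E F : Ω → Prop}
    (h : ∀ ω, E ω ↔ F ω) : pr P E = pr P F := by
  unfold pr; exact Finset.sum_congr rfl fun ω _ => by rw [iff_iff_eq.mp (h ω)]

lemma pr_nonneg {Ω : Type} [Fintype Ω] {P : Ω → ℝ} (hP : ∀ ω, 0 ≤ P ω) (E : Ω → Prop) :
    0 ≤ pr P E :=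
  Finset.sum_nonneg fun ω _ => by by_cases h : E ω <;> simp [pr, h, hP ω]

lemma pr_partition {Ω B : Type} [Fintype Ω] [Fintype B] (P : Ω → ℝ) (E : Ω → Prop)
    (g : Ω → B) : pr P E = ∑ b : B, pr P (fun ω => E ω ∧ g ω = b) := by
  unfold pr
  rw [Finset.sum_comm]
  refine Finset.sum_congr rfl fun ω _ => ?_
  by_cases h : E ω
  · simp [h]
  · simp [h]

lemma condMI_eq_zero_of_factor {Ω A B C : Type} [Fintype Ω] [Fintype A] [Fintype B] [Fintype C]
    (P : Ω → ℝ) (hP : ∀ ω, 0 ≤ P ω) (f : Ω → A) (g : Ω → B) (h : Ω → C)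
    (Af : B → C → ℝ) (Bf : A → C → ℝ)
    (hfac : ∀ a b c, pr P (fun ω => f ω = a ∧ g ω = b ∧ h ω = c) = Af b c * Bf a c) :
    condMI P f g h = 0 := by
  unfold condMI
  refine Finset.sum_eq_zero fun a _ => Finset.sum_eq_zero fun b _ =>
    Finset.sum_eq_zero fun c _ => ?_
  set p := pr P (fun ω => f ω = a ∧ g ω = b ∧ h ω = c) with hp
  by_cases hp0 : p = 0
  · rw [hp0, zero_mul]
  have hppos : 0 < p := lt_of_le_of_ne (pr_nonneg hP _) (Ne.symm hp0)
  have hfh : ∀ a', pr P (fun ω => f ω = a' ∧ h ω = c) = (∑ b', Af b' c) * Bf a' c := by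
    intro a'
    rw [pr_partition P _ g, Finset.sum_mul]
    refine Finset.sum_congr rfl fun b' _ => ?_
    rw [← hfac a' b' c]
    exact pr_congr P fun ω => by tauto
  have hgh : pr P (fun ω => g ω = b ∧ h ω = c) = Af b c * (∑ a', Bf a' c) := by
    rw [pr_partition P _ f, Finset.mul_sum]
    refine Finset.sum_congr rfl fun a' _ => ?_
    rw [← hfac a' b c]
    exact pr_congr P fun ω => by tauto
  have hh : pr P (fun ω => h ω = c) = (∑ b', Af b' c) * (∑ a', Bf a' c) := by
    rw [pr_partition P _ f, Finset.mul_sum]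
    refine Finset.sum_congr rfl fun a' _ => ?_
    rw [← hfh a']
    exact pr_congr P fun ω => by tauto
  have hfh_ge : p ≤ pr P (fun ω => f ω = a ∧ h ω = c) := by
    rw [pr_partition P _ g]
    have : p = pr P (fun ω => (f ω = a ∧ h ω = c) ∧ g ω = b) :=
      pr_congr P fun ω => by tauto
    rw [this]
    exact Finset.single_le_sum
      (fun b' _ => pr_nonneg hP (fun ω => (f ω = a ∧ h ω = c) ∧ g ω = b')) (Finset.mem_univ b)
  have hgh_ge : p ≤ pr P (fun ω => g ω = b ∧ h ω = c) := by
    rw [pr_partition P _ f]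
    have : p = pr P (fun ω => (g ω = b ∧ h ω = c) ∧ f ω = a) :=
      pr_congr P fun ω => by tauto
    rw [this]
    exact Finset.single_le_sum
      (fun a' _ => pr_nonneg hP (fun ω => (g ω = b ∧ h ω = c) ∧ f ω = a')) (Finset.mem_univ a)
  have hh_ge : p ≤ pr P (fun ω => h ω = c) := by
    refine le_trans hfh_ge ?_
    rw [pr_partition P (fun ω => h ω = c) f]
    have : pr P (fun ω => f ω = a ∧ h ω = c) = pr P (fun ω => h ω = c ∧ f ω = a) :=
      pr_congr P fun ω => by tauto
    rw [this]
    exact Finset.single_le_sum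
      (fun a' _ => pr_nonneg hP (fun ω => (h ω = c) ∧ f ω = a')) (Finset.mem_univ a)
  set pfh := pr P (fun ω => f ω = a ∧ h ω = c) with hpfh
  set pgh := pr P (fun ω => g ω = b ∧ h ω = c) with hpgh
  set ph := pr P (fun ω => h ω = c) with hph
  have hfh_pos : 0 < pfh := lt_of_lt_of_le hppos hfh_ge
  have hgh_pos : 0 < pgh := lt_of_lt_of_le hppos hgh_ge
  have hh_pos : 0 < ph := lt_of_lt_of_le hppos hh_ge
  have e1 : p = Af b c * Bf a c := by rw [hp, hfac a b c]
  have e2 : pfh = (∑ b', Af b' c) * Bf a c := by rw [hpfh, hfh a]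
  have hkey : p * ph = pfh * pgh := by rw [e1, e2, hgh, hh]; ring
  have hcp1 : condPr P (fun ω => f ω = a ∧ g ω = b) (fun ω => h ω = c) = p / ph := by
    unfold condPr
    rw [hp]
    congr 1
    exact pr_congr P fun ω => by tauto
  have hcp2 : condPr P (fun ω => f ω = a) (fun ω => h ω = c) = pfh / ph := rfl
  have hcp3 : condPr P (fun ω => g ω = b) (fun ω => h ω = c) = pgh / ph := rfl
  rw [hcp1, hcp2, hcp3]
  have harg : p / ph / (pfh / ph * (pgh / ph)) = 1 := by
    rw [div_eq_one_iff_eq (by positivity)]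
    field_simp
    nlinarith [hkey]
  rw [harg, Real.log_one, mul_zero]

lemma sum_ite_prop {α : Type} [Fintype α] (c : Prop) (f : α → ℝ) :
    ∑ a, (if c then f a else 0) = if c then ∑ a, f a else 0 := by
  by_cases h : c <;> simp [h]

section Congr

variable {T : ℕ} {X Y Z S U : Type}

lemma hist_congr {A : Type} {f f' : Fin T → A} {t : Fin T}
    (h : ∀ j : Fin T, j.1 < t.1 → f j = f' j) : hist f t = hist f' t :=
  funext fun i => h _ i.2

lemma histIncl_congr {A : Type} {f f' : Fin T → A} {t : Fin T}
    (h : ∀ j : Fin T, j.1 ≤ t.1 → f j = f' j) : histIncl f t = histIncl f' t :=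
  funext fun i => h _ (Nat.lt_succ_iff.mp i.2)

lemma prev3_congr {x x' : Fin T → X} {y y' : Fin T → Y} {u u' : Fin T → U} {t : Fin T}
    (hx : ∀ j : Fin T, j.1 < t.1 → x j = x' j)
    (hy : ∀ j : Fin T, j.1 < t.1 → y j = y' j)
    (hu : ∀ j : Fin T, j.1 < t.1 → u j = u' j) :
    prev3 x y u t = prev3 x' y' u' t := by
  unfold prev3
  by_cases h : t.1 = 0
  · simp [h]
  · have hlt : t.1 - 1 < t.1 := by omega
    simp only [h, if_false]
    rw [hx _ hlt, hy _ hlt, hu _ hlt]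

lemma update_lt {A : Type} (f : Fin T → A) (ν : Fin T) (v : A) {j : Fin T} (h : j.1 < ν.1) :
    Function.update f ν v j = f j :=
  Function.update_of_ne (by simp [Fin.ext_iff]; omega) _ _

end Congr


/-! ### The marginalization machinery -/

/-- The per-time factor of the joint pmf without the `P_Y` factor. -/
def Fker (K : Kernels X Y Z U) (πe : QPol T Z S U) (πc : CPol T S U)
    (y : Fin T → Y) (x : Fin T → X) (z : Fin T → Z) (s : Fin T → S) (u : Fin T → U)
    (r : Fin T) : ℝ :=
  K.PX (prev3 x y u r) (x r) * K.PZ (x r) (z r) *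
    πe r (histIncl z r) (hist s r) (hist u r) (s r) *
    πc r (histIncl s r) (hist u r) (u r)

lemma Fker_congr {K : Kernels X Y Z U} {πe : QPol T Z S U} {πc : CPol T S U}
    {y y' : Fin T → Y} {x x' : Fin T → X} {z z' : Fin T → Z} {s s' : Fin T → S}
    {u u' : Fin T → U} (r : Fin T)
    (hy : ∀ j : Fin T, j.1 < r.1 → y j = y' j)
    (hx : ∀ j : Fin T, j.1 ≤ r.1 → x j = x' j)
    (hz : ∀ j : Fin T, j.1 ≤ r.1 → z j = z' j)
    (hs : ∀ j : Fin T, j.1 ≤ r.1 → s j = s' j)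
    (hu : ∀ j : Fin T, j.1 ≤ r.1 → u j = u' j) :
    Fker K πe πc y x z s u r = Fker K πe πc y' x' z' s' u' r := by
  unfold Fker
  have e1 : prev3 x y u r = prev3 x' y' u' r :=
    prev3_congr (fun j hj => hx j (le_of_lt hj)) hy (fun j hj => hu j (le_of_lt hj))
  have e2 : histIncl z r = histIncl z' r := histIncl_congr hz
  have e3 : hist s r = hist s' r := hist_congr (fun j hj => hs j (le_of_lt hj))
  have e4 : hist u r = hist u' r := hist_congr (fun j hj => hu j (le_of_lt hj))
  have e5 : histIncl s r = histIncl s' r := histIncl_congr hs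
  rw [e1, e2, e3, e4, e5, hx r le_rfl, hz r le_rfl, hs r le_rfl, hu r le_rfl]

def wX (w : Fin T → X × Z × S × U) : Fin T → X := fun r => (w r).1
def wZ (w : Fin T → X × Z × S × U) : Fin T → Z := fun r => (w r).2.1
def wS (w : Fin T → X × Z × S × U) : Fin T → S := fun r => (w r).2.2.1
def wU (w : Fin T → X × Z × S × U) : Fin T → U := fun r => (w r).2.2.2

/-- The indicator condition on `(s, u)`. -/
def Ind (t : Fin T) (a1 : S) (a2 : U) (cs : Fin t.1 → S) (cu : Fin t.1 → U)
    (s : Fin T → S) (u : Fin T → U) : Prop :=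
  s t = a1 ∧ u t = a2 ∧ hist s t = cs ∧ hist u t = cu

lemma Ind_congr {t : Fin T} {a1 : S} {a2 : U} {cs : Fin t.1 → S} {cu : Fin t.1 → U}
    {s s' : Fin T → S} {u u' : Fin T → U}
    (hs : ∀ j : Fin T, j.1 ≤ t.1 → s j = s' j)
    (hu : ∀ j : Fin T, j.1 ≤ t.1 → u j = u' j) :
    Ind t a1 a2 cs cu s u ↔ Ind t a1 a2 cs cu s' u' := by
  unfold Ind
  rw [hs t le_rfl, hu t le_rfl, hist_congr (fun j hj => hs j hj.le),
    hist_congr (fun j hj => hu j hj.le)]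

lemma prodF_congr {K : Kernels X Y Z U} {πe : QPol T Z S U} {πc : CPol T S U} (n : ℕ)
    {y y' : Fin T → Y} {x x' : Fin T → X} {z z' : Fin T → Z} {s s' : Fin T → S}
    {u u' : Fin T → U}
    (hy : ∀ j : Fin T, j.1 + 1 < n → y j = y' j)
    (hx : ∀ j : Fin T, j.1 < n → x j = x' j)
    (hz : ∀ j : Fin T, j.1 < n → z j = z' j)
    (hs : ∀ j : Fin T, j.1 < n → s j = s' j)
    (hu : ∀ j : Fin T, j.1 < n → u j = u' j) :
    ∏ r ∈ Finset.univ.filter (fun r : Fin T => r.1 < n), Fker K πe πc y x z s u r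
      = ∏ r ∈ Finset.univ.filter (fun r : Fin T => r.1 < n), Fker K πe πc y' x' z' s' u' r := by
  refine Finset.prod_congr rfl fun r hr => ?_
  have hrn : r.1 < n := (Finset.mem_filter.mp hr).2
  exact Fker_congr r (fun j hj => hy j (by omega)) (fun j hj => hx j (by omega))
    (fun j hj => hz j (by omega)) (fun j hj => hs j (by omega)) (fun j hj => hu j (by omega))

/-- The partially marginalized sum. -/
def Sig (K : Kernels X Y Z U) (πe : QPol T Z S U) (πc : CPol T S U) (t : Fin T)
    (a1 : S) (a2 : U) (cs : Fin t.1 → S) (cu : Fin t.1 → U) (y : Fin T → Y) (n : ℕ) : ℝ :=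
  ∑ w : Fin T → X × Z × S × U,
    if Ind t a1 a2 cs cu (wS w) (wU w) then
      ∏ r ∈ Finset.univ.filter (fun r : Fin T => r.1 < n),
        Fker K πe πc y (wX w) (wZ w) (wS w) (wU w) r
    else 0


lemma Sig_step [Nonempty X] [Nonempty Y] [Nonempty Z] [Nonempty S] [Nonempty U]
    {K : Kernels X Y Z U} {πe : QPol T Z S U} {πc : CPol T S U}
    (hπe : IsQPol πe) (hπc : IsCPol πc)
    {t : Fin T} {a1 : S} {a2 : U} {cs : Fin t.1 → S} {cu : Fin t.1 → U}
    (y : Fin T → Y) {n : ℕ} (htn : t.1 < n) (hnT : n < T) :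
    Sig K πe πc t a1 a2 cs cu y n
      = (Fintype.card (X × Z × S × U) : ℝ) * Sig K πe πc t a1 a2 cs cu y (n + 1) := by
  classical
  set ν : Fin T := ⟨n, hnT⟩ with hν
  refine Eq.symm (sum_pi_factor ν
    (fun w => if Ind t a1 a2 cs cu (wS w) (wU w) then
        ∏ r ∈ Finset.univ.filter (fun r : Fin T => r.1 < n + 1),
          Fker K πe πc y (wX w) (wZ w) (wS w) (wU w) r
      else 0)
    (fun w => if Ind t a1 a2 cs cu (wS w) (wU w) then
        ∏ r ∈ Finset.univ.filter (fun r : Fin T => r.1 < n),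
          Fker K πe πc y (wX w) (wZ w) (wS w) (wU w) r
      else 0)
    (fun w v =>
      Fker K πe πc y (wX (Function.update w ν v)) (wZ (Function.update w ν v))
        (wS (Function.update w ν v)) (wU (Function.update w ν v)) ν)
    ?_ ?_ ?_ ?_)
  · -- hdec
    intro w
    have hq0 : Function.update w ν (w ν) = w := Function.update_eq_self ν w
    have hnot : ν ∉ Finset.univ.filter (fun r : Fin T => r.1 < n) := by simp [hν]
    have hsplit : Finset.univ.filter (fun r : Fin T => r.1 < n + 1)
        = insert ν (Finset.univ.filter (fun r : Fin T => r.1 < n)) := by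
      ext r
      simp only [Finset.mem_filter, Finset.mem_insert, Finset.mem_univ, true_and,
        Fin.ext_iff, hν]
      omega
    rw [hsplit, Finset.prod_insert hnot, hq0]
    by_cases h : Ind t a1 a2 cs cu (wS w) (wU w)
    · simp only [if_pos h]; ring
    · simp only [if_neg h, zero_mul]
  · -- hG
    intro w v
    have hag : ∀ j : Fin T, j.1 < n → Function.update w ν v j = w j := by
      intro j hj
      exact update_lt w ν v (by simpa [hν] using hj)
    have hIff : Ind t a1 a2 cs cu (wS (Function.update w ν v)) (wU (Function.update w ν v))
        ↔ Ind t a1 a2 cs cu (wS w) (wU w) :=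
      Ind_congr (fun j hj => congrArg (fun p => p.2.2.1) (hag j (by omega)))
        (fun j hj => congrArg (fun p => p.2.2.2) (hag j (by omega)))
    have hprod := prodF_congr (K := K) (πe := πe) (πc := πc) n
      (y := y) (y' := y)
      (x := wX (Function.update w ν v)) (x' := wX w)
      (z := wZ (Function.update w ν v)) (z' := wZ w)
      (s := wS (Function.update w ν v)) (s' := wS w)
      (u := wU (Function.update w ν v)) (u' := wU w)
      (fun j _ => rfl)
      (fun j hj => congrArg (fun p => p.1) (hag j hj))
      (fun j hj => congrArg (fun p => p.2.1) (hag j hj))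
      (fun j hj => congrArg (fun p => p.2.2.1) (hag j hj))
      (fun j hj => congrArg (fun p => p.2.2.2) (hag j hj))
    exact if_congr hIff hprod rfl
  · -- hq
    intro w v v'
    rw [Function.update_idem]
  · -- hsum
    intro w
    have hform : ∀ vx : X, ∀ vz : Z, ∀ vs : S, ∀ vu : U,
        Fker K πe πc y (wX (Function.update w ν (vx, vz, vs, vu)))
          (wZ (Function.update w ν (vx, vz, vs, vu)))
          (wS (Function.update w ν (vx, vz, vs, vu)))
          (wU (Function.update w ν (vx, vz, vs, vu))) ν
        = K.PX (prev3 (wX w) y (wU w) ν) vx * K.PZ vx vz *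
            πe ν (fun i => if hi : i.1 < ν.1 then wZ w ⟨i.1, lt_trans hi ν.2⟩ else vz)
              (hist (wS w) ν) (hist (wU w) ν) vs *
            πc ν (fun i => if hi : i.1 < ν.1 then wS w ⟨i.1, lt_trans hi ν.2⟩ else vs)
              (hist (wU w) ν) vu := by
      intro vx vz vs vu
      set w' := Function.update w ν (vx, vz, vs, vu) with hw'
      have hag : ∀ j : Fin T, j.1 < ν.1 → w' j = w j := by
        intro j hj
        exact update_lt w ν _ hj
      have hXν : wX w' ν = vx := by simp [hw', wX]
      have hZν : wZ w' ν = vz := by simp [hw', wZ]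
      have hSν : wS w' ν = vs := by simp [hw', wS]
      have hUν : wU w' ν = vu := by simp [hw', wU]
      have e1 : prev3 (wX w') y (wU w') ν = prev3 (wX w) y (wU w) ν :=
        prev3_congr (fun j hj => congrArg (fun p => p.1) (hag j hj)) (fun _ _ => rfl)
          (fun j hj => congrArg (fun p => p.2.2.2) (hag j hj))
      have e2 : histIncl (wZ w') ν
          = fun i => if hi : i.1 < ν.1 then wZ w ⟨i.1, lt_trans hi ν.2⟩ else vz := by
        funext i
        by_cases hi : i.1 < ν.1
        · rw [dif_pos hi]
          exact congrArg (fun p => p.2.1) (hag ⟨i.1, lt_trans hi ν.2⟩ hi)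
        · rw [dif_neg hi]
          have hi' : (⟨i.1, lt_of_le_of_lt (Nat.lt_succ_iff.mp i.2) ν.2⟩ : Fin T) = ν :=
            Fin.ext (le_antisymm (Nat.lt_succ_iff.mp i.2) (not_lt.mp hi))
          show wZ w' _ = vz
          rw [hi', hZν]
      have e5 : histIncl (wS w') ν
          = fun i => if hi : i.1 < ν.1 then wS w ⟨i.1, lt_trans hi ν.2⟩ else vs := by
        funext i
        by_cases hi : i.1 < ν.1
        · rw [dif_pos hi]
          exact congrArg (fun p => p.2.2.1) (hag ⟨i.1, lt_trans hi ν.2⟩ hi)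
        · rw [dif_neg hi]
          have hi' : (⟨i.1, lt_of_le_of_lt (Nat.lt_succ_iff.mp i.2) ν.2⟩ : Fin T) = ν :=
            Fin.ext (le_antisymm (Nat.lt_succ_iff.mp i.2) (not_lt.mp hi))
          show wS w' _ = vs
          rw [hi', hSν]
      have e3 : hist (wS w') ν = hist (wS w) ν :=
        hist_congr (fun j hj => congrArg (fun p => p.2.2.1) (hag j hj))
      have e4 : hist (wU w') ν = hist (wU w) ν :=
        hist_congr (fun j hj => congrArg (fun p => p.2.2.2) (hag j hj))
      unfold Fker
      rw [e1, e2, e3, e4, e5, hXν, hZν, hSν, hUν]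
    calc ∑ v : X × Z × S × U,
          Fker K πe πc y (wX (Function.update w ν v)) (wZ (Function.update w ν v))
            (wS (Function.update w ν v)) (wU (Function.update w ν v)) ν
        = ∑ vx : X, ∑ vz : Z, ∑ vs : S, ∑ vu : U,
            K.PX (prev3 (wX w) y (wU w) ν) vx * K.PZ vx vz *
              πe ν (fun i => if hi : i.1 < ν.1 then wZ w ⟨i.1, lt_trans hi ν.2⟩ else vz)
                (hist (wS w) ν) (hist (wU w) ν) vs *
              πc ν (fun i => if hi : i.1 < ν.1 then wS w ⟨i.1, lt_trans hi ν.2⟩ else vs)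
                (hist (wU w) ν) vu := by
          rw [Fintype.sum_prod_type]
          refine Finset.sum_congr rfl fun vx _ => ?_
          rw [Fintype.sum_prod_type]
          refine Finset.sum_congr rfl fun vz _ => ?_
          rw [Fintype.sum_prod_type]
          refine Finset.sum_congr rfl fun vs _ => Finset.sum_congr rfl fun vu _ => ?_
          exact hform vx vz vs vu
      _ = ∑ vx : X, ∑ vz : Z, ∑ vs : S,
            K.PX (prev3 (wX w) y (wU w) ν) vx * K.PZ vx vz *
              πe ν (fun i => if hi : i.1 < ν.1 then wZ w ⟨i.1, lt_trans hi ν.2⟩ else vz)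
                (hist (wS w) ν) (hist (wU w) ν) vs := by
          refine Finset.sum_congr rfl fun vx _ => Finset.sum_congr rfl fun vz _ =>
            Finset.sum_congr rfl fun vs _ => ?_
          rw [← Finset.mul_sum, hπc.2, mul_one]
      _ = ∑ vx : X, ∑ vz : Z, K.PX (prev3 (wX w) y (wU w) ν) vx * K.PZ vx vz := by
          refine Finset.sum_congr rfl fun vx _ => Finset.sum_congr rfl fun vz _ => ?_
          rw [← Finset.mul_sum, hπe.2, mul_one]
      _ = ∑ vx : X, K.PX (prev3 (wX w) y (wU w) ν) vx := by
          refine Finset.sum_congr rfl fun vx _ => ?_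
          rw [← Finset.mul_sum, K.PZ_sum, mul_one]
      _ = 1 := K.PX_sum _


lemma Sig_chain [Nonempty X] [Nonempty Y] [Nonempty Z] [Nonempty S] [Nonempty U]
    {K : Kernels X Y Z U} {πe : QPol T Z S U} {πc : CPol T S U}
    (hπe : IsQPol πe) (hπc : IsCPol πc)
    {t : Fin T} {a1 : S} {a2 : U} {cs : Fin t.1 → S} {cu : Fin t.1 → U}
    (y : Fin T → Y) :
    ∀ m : ℕ, t.1 + 1 + m ≤ T →
      Sig K πe πc t a1 a2 cs cu y (t.1 + 1)
        = (Fintype.card (X × Z × S × U) : ℝ) ^ m * Sig K πe πc t a1 a2 cs cu y (t.1 + 1 + m) := by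
  intro m
  induction m with
  | zero => intro _; simp
  | succ m ih =>
    intro h
    have h1 : t.1 + 1 + m ≤ T := by omega
    have h2 : t.1 + 1 + m < T := by omega
    rw [ih h1, Sig_step hπe hπc y (by omega) h2]
    show _ = _ * Sig K πe πc t a1 a2 cs cu y ((t.1 + 1 + m) + 1)
    ring

lemma Sig_y_congr {K : Kernels X Y Z U} {πe : QPol T Z S U} {πc : CPol T S U}
    {t : Fin T} {a1 : S} {a2 : U} {cs : Fin t.1 → S} {cu : Fin t.1 → U}
    {y y' : Fin T → Y} (h : ∀ j : Fin T, j.1 < t.1 → y j = y' j) :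
    Sig K πe πc t a1 a2 cs cu y (t.1 + 1) = Sig K πe πc t a1 a2 cs cu y' (t.1 + 1) := by
  unfold Sig
  refine Finset.sum_congr rfl fun w _ => ?_
  exact if_congr Iff.rfl
    (prodF_congr (t.1 + 1) (fun j hj => h j (by omega)) (fun _ _ => rfl) (fun _ _ => rfl)
      (fun _ _ => rfl) (fun _ _ => rfl)) rfl

/-- The trajectory of private inputs determined by its past and future parts. -/
def ycomb (t : Fin T) (b : Fin (T - t.1) → Y) (cy : Fin t.1 → Y) : Fin T → Y :=
  fun r => if h : r.1 < t.1 then cy ⟨r.1, h⟩ else b ⟨r.1 - t.1, by have := r.2; omega⟩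

/-- Packing the four non-private trajectories into a single function. -/
def pack : ((Fin T → X) × (Fin T → Z) × (Fin T → S) × (Fin T → U)) ≃ (Fin T → X × Z × S × U) where
  toFun p := fun r => (p.1 r, p.2.1 r, p.2.2.1 r, p.2.2.2 r)
  invFun w := (wX w, wZ w, wS w, wU w)
  left_inv p := rfl
  right_inv w := rfl

lemma Sig_T_eq (K : Kernels X Y Z U) (πe : QPol T Z S U) (πc : CPol T S U)
    (t : Fin T) (a1 : S) (a2 : U) (cs : Fin t.1 → S) (cu : Fin t.1 → U) (y : Fin T → Y) :
    Sig K πe πc t a1 a2 cs cu y T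
      = ∑ x : Fin T → X, ∑ z : Fin T → Z, ∑ s : Fin T → S, ∑ u : Fin T → U,
          if Ind t a1 a2 cs cu s u then ∏ r : Fin T, Fker K πe πc y x z s u r else 0 := by
  unfold Sig
  have hfil : Finset.univ.filter (fun r : Fin T => r.1 < T) = Finset.univ :=
    Finset.filter_true_of_mem (fun r _ => r.2)
  rw [hfil]
  refine (Equiv.sum_comp pack _).symm.trans ?_
  simp only [Fintype.sum_prod_type]
  rfl

lemma joint_nonneg {K : Kernels X Y Z U} {πe : QPol T Z S U} {πc : CPol T S U}
    (hπe : IsQPol πe) (hπc : IsCPol πc) : ∀ ω, 0 ≤ joint K πe πc ω := by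
  rintro ⟨x, y, z, s, u⟩
  refine Finset.prod_nonneg fun r _ => ?_
  exact mul_nonneg (mul_nonneg (mul_nonneg (mul_nonneg (K.PY_nonneg _ _) (K.PX_nonneg _ _))
    (K.PZ_nonneg _ _)) (hπe.1 _ _ _ _ _)) (hπc.1 _ _ _ _)


/-- The inclusive future `(a_t, a_{t+1}, …, a_T)` of a trajectory (0-indexed). -/
def futIncl {A : Type} (f : Fin T → A) (t : Fin T) : Fin (T - t.1) → A :=
  fun i => f ⟨t.1 + i.1, by have h1 := i.2; have h2 := t.2; omega⟩


lemma ycond_iff (t : Fin T) (b : Fin (T - t.1) → Y) (cy : Fin t.1 → Y) (y : Fin T → Y) :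
    (futIncl y t = b ∧ hist y t = cy) ↔ y = ycomb t b cy := by
  constructor
  · rintro ⟨h1, h2⟩
    funext r
    by_cases h : r.1 < t.1
    · have hh := congrFun h2 ⟨r.1, h⟩
      simp only [hist] at hh
      simp only [ycomb, dif_pos h]
      rw [← hh]
    · have hb : r.1 - t.1 < T - t.1 := by have := r.2; omega
      have hh := congrFun h1 ⟨r.1 - t.1, hb⟩
      simp only [futIncl] at hh
      rw [ycomb, dif_neg h, ← hh]
      exact congrArg y (Fin.ext (show r.1 = t.1 + (r.1 - t.1) by omega))
  · rintro rfl
    refine ⟨funext fun i => ?_, funext fun i => ?_⟩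
    · have hnot : ¬ (t.1 + i.1 < t.1) := by omega
      simp only [futIncl, ycomb, dif_neg hnot]
      exact congrArg b (Fin.ext (show t.1 + i.1 - t.1 = i.1 by omega))
    · simp only [hist, ycomb, dif_pos i.2]


/-- Unpacking a trajectory into its private part and the rest. -/
def unpackE : Traj T X Y Z S U ≃ ((Fin T → Y) × (Fin T → X × Z × S × U)) where
  toFun ω := (trY ω, fun r => (trX ω r, trZ ω r, trS ω r, trU ω r))
  invFun p := (wX p.2, p.1, wZ p.2, wS p.2, wU p.2)
  left_inv ω := rfl
  right_inv p := rfl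

lemma pr_factor [Nonempty X] [Nonempty Y] [Nonempty Z] [Nonempty S] [Nonempty U]
    (K : Kernels X Y Z U) (πe : QPol T Z S U) (πc : CPol T S U)
    (hπe : IsQPol πe) (hπc : IsCPol πc) (t : Fin T)
    (a1 : S) (a2 : U) (b : Fin (T - t.1) → Y)
    (cs : Fin t.1 → S) (cu : Fin t.1 → U) (cy : Fin t.1 → Y) :
    pr (joint K πe πc) (fun ω => (trS ω t = a1 ∧ trU ω t = a2) ∧
        futIncl (trY ω) t = b ∧
        (hist (trS ω) t = cs ∧ hist (trU ω) t = cu ∧ hist (trY ω) t = cy))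
      = ((∏ r : Fin T, K.PY (prevO (ycomb t b cy) r) (ycomb t b cy r)) *
          ((Fintype.card (X × Z × S × U) : ℝ) ^ (T - (t.1 + 1)))⁻¹) *
        Sig K πe πc t a1 a2 cs cu (ycomb t (fun _ => Classical.arbitrary Y) cy) (t.1 + 1) := by
  classical
  set y₀ := ycomb t b cy with hy₀
  have h1 : pr (joint K πe πc) (fun ω => (trS ω t = a1 ∧ trU ω t = a2) ∧
        futIncl (trY ω) t = b ∧
        (hist (trS ω) t = cs ∧ hist (trU ω) t = cu ∧ hist (trY ω) t = cy))
      = pr (joint K πe πc)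
        (fun ω => trY ω = y₀ ∧ Ind t a1 a2 cs cu (trS ω) (trU ω)) := by
    refine pr_congr _ fun ω => ?_
    have hy := ycond_iff t b cy (trY ω)
    unfold Ind
    tauto
  rw [h1]
  have e1 : pr (joint K πe πc)
        (fun ω => trY ω = y₀ ∧ Ind t a1 a2 cs cu (trS ω) (trU ω))
      = ∑ p : (Fin T → Y) × (Fin T → X × Z × S × U),
          if p.1 = y₀ ∧ Ind t a1 a2 cs cu (wS p.2) (wU p.2) then
            joint K πe πc (wX p.2, p.1, wZ p.2, wS p.2, wU p.2) else 0 :=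
    Fintype.sum_equiv unpackE _ _ (fun ω => ite_congr rfl (fun _ => rfl) (fun _ => rfl))
  have e2 : (∑ p : (Fin T → Y) × (Fin T → X × Z × S × U),
          if p.1 = y₀ ∧ Ind t a1 a2 cs cu (wS p.2) (wU p.2) then
            joint K πe πc (wX p.2, p.1, wZ p.2, wS p.2, wU p.2) else 0)
      = ∑ y : Fin T → Y, ∑ w : Fin T → X × Z × S × U,
          if y = y₀ ∧ Ind t a1 a2 cs cu (wS w) (wU w) then
            joint K πe πc (wX w, y, wZ w, wS w, wU w) else 0 :=
    Fintype.sum_prod_type _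
  have e3 : (∑ y : Fin T → Y, ∑ w : Fin T → X × Z × S × U,
          if y = y₀ ∧ Ind t a1 a2 cs cu (wS w) (wU w) then
            joint K πe πc (wX w, y, wZ w, wS w, wU w) else 0)
      = ∑ w : Fin T → X × Z × S × U,
          if Ind t a1 a2 cs cu (wS w) (wU w) then
            joint K πe πc (wX w, y₀, wZ w, wS w, wU w) else 0 := by
    have lift : ∀ y : Fin T → Y,
        (∑ w : Fin T → X × Z × S × U,
          if y = y₀ ∧ Ind t a1 a2 cs cu (wS w) (wU w) then
            joint K πe πc (wX w, y, wZ w, wS w, wU w) else 0)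
        = if y = y₀ then
            (∑ w : Fin T → X × Z × S × U,
              if Ind t a1 a2 cs cu (wS w) (wU w) then
                joint K πe πc (wX w, y₀, wZ w, wS w, wU w) else 0) else 0 := by
      intro y
      by_cases h : y = y₀
      · subst h; simp
      · simp [h]
    refine (Finset.sum_congr rfl fun y _ => lift y).trans ?_
    rw [Finset.sum_ite_eq' Finset.univ y₀]
    simp
  have hjoint : ∀ w : Fin T → X × Z × S × U,
      joint K πe πc (wX w, y₀, wZ w, wS w, wU w)
        = (∏ r : Fin T, K.PY (prevO y₀ r) (y₀ r)) *
            ∏ r : Fin T, Fker K πe πc y₀ (wX w) (wZ w) (wS w) (wU w) r := by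
    intro w
    simp only [joint, Fker]
    rw [← Finset.prod_mul_distrib]
    exact Finset.prod_congr rfl fun r _ => by ring
  have e4 : (∑ w : Fin T → X × Z × S × U,
          if Ind t a1 a2 cs cu (wS w) (wU w) then
            joint K πe πc (wX w, y₀, wZ w, wS w, wU w) else 0)
      = (∏ r : Fin T, K.PY (prevO y₀ r) (y₀ r)) * Sig K πe πc t a1 a2 cs cu y₀ T := by
    unfold Sig
    have hfil : Finset.univ.filter (fun r : Fin T => r.1 < T) = Finset.univ :=
      Finset.filter_true_of_mem (fun r _ => r.2)
    rw [hfil, Finset.mul_sum]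
    refine Finset.sum_congr rfl fun w _ => ?_
    by_cases h : Ind t a1 a2 cs cu (wS w) (wU w)
    · rw [if_pos h, if_pos h, hjoint w]
    · rw [if_neg h, if_neg h, mul_zero]
  rw [e1, e2, e3, e4]
  set Kc : ℝ := (Fintype.card (X × Z × S × U) : ℝ) with hKc
  have hKc0 : Kc ≠ 0 := by
    rw [hKc]
    have : 0 < Fintype.card (X × Z × S × U) := Fintype.card_pos
    positivity
  have hm : t.1 + 1 + (T - (t.1 + 1)) = T := by have := t.2; omega
  have hchain := Sig_chain (K := K) hπe hπc (t := t) (a1 := a1) (a2 := a2) (cs := cs) (cu := cu)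
    y₀ (T - (t.1 + 1)) (by omega)
  rw [hm, ← hKc] at hchain
  have hTval : Sig K πe πc t a1 a2 cs cu y₀ T
      = (Kc ^ (T - (t.1 + 1)))⁻¹ * Sig K πe πc t a1 a2 cs cu y₀ (t.1 + 1) := by
    rw [hchain, ← mul_assoc, inv_mul_cancel₀ (pow_ne_zero _ hKc0), one_mul]
  have hcongr : Sig K πe πc t a1 a2 cs cu y₀ (t.1 + 1)
      = Sig K πe πc t a1 a2 cs cu (ycomb t (fun _ => Classical.arbitrary Y) cy) (t.1 + 1) := by
    refine Sig_y_congr fun j hj => ?_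
    simp only [hy₀, ycomb, dif_pos hj]
  rw [hTval, hcongr]
  ring

/-- The current disclosed pair `(S_t, U_t)` carries no
conditional information about the present-and-future private inputs
`(Y_t, …, Y_T)` given the past `(S^{t-1}, U^{t-1}, Y^{t-1})`:
`I((S_t, U_t); (Y_t, …, Y_T) | S^{t-1}, U^{t-1}, Y^{t-1}) = 0`
(for `t = 1` the conditioning is on one-point history types, hence vacuous). -/
theorem no_leakage_of_future_private_inputs
    [Nonempty X] [Nonempty Y] [Nonempty Z] [Nonempty S] [Nonempty U]
    (hT : 1 ≤ T) (K : Kernels X Y Z U)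
    (πe : QPol T Z S U) (πc : CPol T S U) (hπe : IsQPol πe) (hπc : IsCPol πc)
    (t : Fin T) :
    condMI (joint K πe πc)
      (fun ω => (trS ω t, trU ω t))
      (fun ω => futIncl (trY ω) t)
      (fun ω => (hist (trS ω) t, hist (trU ω) t, hist (trY ω) t)) = 0 := by
  classical
  refine condMI_eq_zero_of_factor _ (joint_nonneg hπe hπc) _ _ _
    (fun b c => (∏ r : Fin T, K.PY (prevO (ycomb t b c.2.2) r) (ycomb t b c.2.2 r)) *
      ((Fintype.card (X × Z × S × U) : ℝ) ^ (T - (t.1 + 1)))⁻¹)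
    (fun a c => Sig K πe πc t a.1 a.2 c.1 c.2.1
      (ycomb t (fun _ => Classical.arbitrary Y) c.2.2) (t.1 + 1))
    (fun a b c => ?_)
  rw [← pr_factor K πe πc hπe hπc t a.1 a.2 b c.1 c.2.1 c.2.2]
  refine pr_congr _ fun ω => ?_
  simp only [Prod.ext_iff]

end NCS
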